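/- arXiv:1906.12093 — 2 statements merged into one kernel-verified Lean document; each statement's English description precedes it below -/
import Mathlib

section
/- Let Ω ⊂ ℝᴺ be a bounded domain and let (λ₁, φ₁) be the principal Robin eigenpair of the Laplacian with φ₁ > 0 normalized by ∫_Ω φ₁ dx = 1. If w ∈ C²(Ω̄) satisfies −Δw = μ/(1−w)² in Ω with 0 ≤ w < 1 and ∂w/∂ν + βw = 0 on ∂Ω (β > 0), then μ ≤ λ₁ ∫_Ω w φ₁ dx ≤ λ₁. -/
/-!
Test the equation for `w` against `φ₁`: by Green's second identity, whose boundary term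
`φ₁ ∂ᵥw - w ∂ᵥφ₁` vanishes because both functions satisfy the same Robin condition,
`λ₁ ∫ w φ₁ = ∫ μ φ₁ / (1 - w)²`. As `0 ≤ w < 1`, the right side is at least `μ ∫ φ₁ = μ`; this
forces `λ₁ > 0`, and then `∫ w φ₁ ≤ ∫ φ₁ = 1` gives the second inequality.
-/

open MeasureTheory Real Set

/-- Divergence of a vector field on Euclidean space. -/
noncomputable def divg {N : ℕ} (F : EuclideanSpace ℝ (Fin N) → EuclideanSpace ℝ (Fin N))
    (x : EuclideanSpace ℝ (Fin N)) : ℝ :=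
  ∑ i, fderiv ℝ F x (EuclideanSpace.single i 1) i

/-- Laplacian of a scalar field on Euclidean space. -/
noncomputable def lap {N : ℕ} (u : EuclideanSpace ℝ (Fin N) → ℝ)
    (x : EuclideanSpace ℝ (Fin N)) : ℝ :=
  ∑ i, fderiv ℝ (fun y => fderiv ℝ u y (EuclideanSpace.single i 1)) x (EuclideanSpace.single i 1)

theorem contDiff_gradient {F : Type*} [NormedAddCommGroup F] [InnerProductSpace ℝ F]
    [CompleteSpace F] {v : F → ℝ} {m n : WithTop ℕ∞} (hv : ContDiff ℝ n v) (hmn : m + 1 ≤ n) :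
    ContDiff ℝ m (gradient v) :=
  (InnerProductSpace.toDual ℝ F).symm.contDiff.comp (hv.fderiv_right hmn)

section VectorCalculus

variable {N : ℕ}

theorem gradient_apply_single (v : EuclideanSpace ℝ (Fin N) → ℝ) (x : EuclideanSpace ℝ (Fin N))
    (i : Fin N) : gradient v x i = fderiv ℝ v x (EuclideanSpace.single i 1) := by
  rw [← inner_gradient_left, EuclideanSpace.inner_single_right, one_mul, conj_trivial]

theorem lap_eq_divg_gradient {v : EuclideanSpace ℝ (Fin N) → ℝ} {x : EuclideanSpace ℝ (Fin N)}
    (hv : DifferentiableAt ℝ (gradient v) x) : lap v x = divg (gradient v) x := by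
  refine Finset.sum_congr rfl fun i _ => ?_
  have hcoord : (fun y => fderiv ℝ v y (EuclideanSpace.single i 1))
      = fun y => EuclideanSpace.proj (𝕜 := ℝ) i (gradient v y) := by
    funext y; simp [gradient_apply_single]
  have hderiv : HasFDerivAt (fun y => EuclideanSpace.proj (𝕜 := ℝ) i (gradient v y))
      ((EuclideanSpace.proj i).comp (fderiv ℝ (gradient v) x)) x :=
    (EuclideanSpace.proj (𝕜 := ℝ) i).hasFDerivAt.comp x hv.hasFDerivAt
  rw [hcoord, hderiv.fderiv]
  rfl

theorem divg_smul {u : EuclideanSpace ℝ (Fin N) → ℝ}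
    {G : EuclideanSpace ℝ (Fin N) → EuclideanSpace ℝ (Fin N)} {x : EuclideanSpace ℝ (Fin N)}
    (hu : DifferentiableAt ℝ u x) (hG : DifferentiableAt ℝ G x) :
    divg (fun y => u y • G y) x = inner ℝ (gradient u x) (G x) + u x * divg G x := by
  simp only [divg, fderiv_fun_smul hu hG, add_apply, smul_apply,
    ContinuousLinearMap.smulRight_apply, PiLp.add_apply, PiLp.smul_apply, smul_eq_mul, Finset.sum_add_distrib, Finset.mul_sum, PiLp.inner_apply,
    RCLike.inner_apply, conj_trivial, gradient_apply_single]
  rw [add_comm]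
  congr 1
  exact Finset.sum_congr rfl fun i _ => mul_comm _ _

theorem divg_sub {A B : EuclideanSpace ℝ (Fin N) → EuclideanSpace ℝ (Fin N)}
    {x : EuclideanSpace ℝ (Fin N)} (hA : DifferentiableAt ℝ A x) (hB : DifferentiableAt ℝ B x) :
    divg (fun y => A y - B y) x = divg A x - divg B x := by
  simp [divg, fderiv_fun_sub hA hB, Finset.sum_sub_distrib]


theorem divg_green {u v : EuclideanSpace ℝ (Fin N) → ℝ} (hu : ContDiff ℝ 2 u) (hv : ContDiff ℝ 2 v)
    (x : EuclideanSpace ℝ (Fin N)) :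
    divg (fun y => u y • gradient v y - v y • gradient u y) x = u x * lap v x - v x * lap u x := by
  have hdu : Differentiable ℝ u := hu.differentiable (by norm_num)
  have hdv : Differentiable ℝ v := hv.differentiable (by norm_num)
  have hgu : Differentiable ℝ (gradient u) := (contDiff_gradient hu le_rfl).differentiable one_ne_zero
  have hgv : Differentiable ℝ (gradient v) := (contDiff_gradient hv le_rfl).differentiable one_ne_zero
  rw [divg_sub ((hdu x).fun_smul (hgv x)) ((hdv x).fun_smul (hgu x)), divg_smul (hdu x) (hgv x),
    divg_smul (hdv x) (hgu x), lap_eq_divg_gradient (hgu x), lap_eq_divg_gradient (hgv x),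
    real_inner_comm]
  ring

theorem setIntegral_green_eq_zero_of_robin {Ω : Set (EuclideanSpace ℝ (Fin N))}
    {ν : EuclideanSpace ℝ (Fin N) → EuclideanSpace ℝ (Fin N)}
    {σ : Measure (EuclideanSpace ℝ (Fin N))}
    (hdiv : ∀ F : EuclideanSpace ℝ (Fin N) → EuclideanSpace ℝ (Fin N), ContDiff ℝ 1 F →
      (∫ x in Ω, divg F x) = ∫ x in frontier Ω, (inner ℝ (F x) (ν x) : ℝ) ∂σ)
    {β : ℝ} {u v : EuclideanSpace ℝ (Fin N) → ℝ} (hu : ContDiff ℝ 2 u) (hv : ContDiff ℝ 2 v)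
    (hu_robin : ∀ x ∈ frontier Ω, inner ℝ (gradient u x) (ν x) + β * u x = 0)
    (hv_robin : ∀ x ∈ frontier Ω, inner ℝ (gradient v x) (ν x) + β * v x = 0) :
    ∫ x in Ω, (u x * lap v x - v x * lap u x) = 0 := by
  have hF : ContDiff ℝ 1 fun y => u y • gradient v y - v y • gradient u y :=
    ((hu.of_le (by norm_num)).smul (contDiff_gradient hv le_rfl)).sub
      ((hv.of_le (by norm_num)).smul (contDiff_gradient hu le_rfl))
  have hboundary : ∀ x ∈ frontier Ω,
      inner ℝ (u x • gradient v x - v x • gradient u x) (ν x) = 0 := by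
    intro x hx
    rw [inner_sub_left, real_inner_smul_left, real_inner_smul_left]
    linear_combination u x * hv_robin x hx - v x * hu_robin x hx
  simp_rw [← divg_green hu hv]
  rw [hdiv _ hF, setIntegral_congr_fun isClosed_frontier.measurableSet hboundary,
    integral_zero]

theorem eigenvalue_mul_setIntegral_eq {Ω : Set (EuclideanSpace ℝ (Fin N))}
    (hΩ : MeasurableSet Ω) {ν : EuclideanSpace ℝ (Fin N) → EuclideanSpace ℝ (Fin N)}
    {σ : Measure (EuclideanSpace ℝ (Fin N))}
    (hdiv : ∀ F : EuclideanSpace ℝ (Fin N) → EuclideanSpace ℝ (Fin N), ContDiff ℝ 1 F →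
      (∫ x in Ω, divg F x) = ∫ x in frontier Ω, (inner ℝ (F x) (ν x) : ℝ) ∂σ)
    {β lam : ℝ} {φ w f : EuclideanSpace ℝ (Fin N) → ℝ} (hφ : ContDiff ℝ 2 φ)
    (hw : ContDiff ℝ 2 w) (hφ_eig : ∀ x ∈ Ω, -lap φ x = lam * φ x)
    (hw_pde : ∀ x ∈ Ω, -lap w x = f x)
    (hφ_robin : ∀ x ∈ frontier Ω, inner ℝ (gradient φ x) (ν x) + β * φ x = 0)
    (hw_robin : ∀ x ∈ frontier Ω, inner ℝ (gradient w x) (ν x) + β * w x = 0)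
    (hwφ : IntegrableOn (fun x => w x * φ x) Ω) (hfφ : IntegrableOn (fun x => f x * φ x) Ω) :
    lam * ∫ x in Ω, w x * φ x = ∫ x in Ω, f x * φ x := by
  have hgreen := setIntegral_green_eq_zero_of_robin hdiv hφ hw hφ_robin hw_robin
  have hintegrand : ∀ x ∈ Ω, φ x * lap w x - w x * lap φ x = lam * (w x * φ x) - f x * φ x := by
    intro x hx
    linear_combination w x * hφ_eig x hx - φ x * hw_pde x hx
  rw [setIntegral_congr_fun hΩ hintegrand, integral_sub (hwφ.const_mul lam) hfφ,
    integral_const_mul, sub_eq_zero] at hgreen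
  exact hgreen

end VectorCalculus

theorem stmt_4_general {N : ℕ} (Ω : Set (EuclideanSpace ℝ (Fin N)))
    (hΩo : IsOpen Ω) (hΩb : Bornology.IsBounded Ω)
    (ν : EuclideanSpace ℝ (Fin N) → EuclideanSpace ℝ (Fin N))
    (σ : Measure (EuclideanSpace ℝ (Fin N)))
    (hdiv : ∀ F : EuclideanSpace ℝ (Fin N) → EuclideanSpace ℝ (Fin N), ContDiff ℝ 1 F →
      (∫ x in Ω, divg F x) = ∫ x in frontier Ω, (inner ℝ (F x) (ν x) : ℝ) ∂σ)
    (β μ lam₁ : ℝ) (hμ : 0 < μ)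
    (φ₁ : EuclideanSpace ℝ (Fin N) → ℝ) (hφsm : ContDiff ℝ 2 φ₁)
    (hφeig : ∀ x ∈ Ω, -lap φ₁ x = lam₁ * φ₁ x)
    (hφrobin : ∀ x ∈ frontier Ω, (inner ℝ (gradient φ₁ x) (ν x) : ℝ) + β * φ₁ x = 0)
    (hφpos : ∀ x ∈ Ω, 0 < φ₁ x)
    (hφnorm : (∫ x in Ω, φ₁ x) = 1)
    (w : EuclideanSpace ℝ (Fin N) → ℝ) (hw : ContDiff ℝ 2 w)
    (hwpde : ∀ x ∈ Ω, -lap w x = μ / (1 - w x) ^ 2)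
    (hw0 : ∀ x ∈ closure Ω, 0 ≤ w x) (hw1 : ∀ x ∈ closure Ω, w x < 1)
    (hwrobin : ∀ x ∈ frontier Ω, (inner ℝ (gradient w x) (ν x) : ℝ) + β * w x = 0) :
    μ ≤ lam₁ * ∫ x in Ω, w x * φ₁ x ∧ lam₁ * (∫ x in Ω, w x * φ₁ x) ≤ lam₁ := by
  have hΩ : MeasurableSet Ω := hΩo.measurableSet
  have integrableOn {g : EuclideanSpace ℝ (Fin N) → ℝ} (hg : ContinuousOn g (closure Ω)) :
      IntegrableOn g Ω := (hg.integrableOn_compact hΩb.isCompact_closure).mono_set subset_closure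
  have hφ : IntegrableOn φ₁ Ω := integrableOn hφsm.continuous.continuousOn
  have hwφ : IntegrableOn (fun x => w x * φ₁ x) Ω :=
    integrableOn (hw.continuous.mul hφsm.continuous).continuousOn
  have hfφ : IntegrableOn (fun x => μ / (1 - w x) ^ 2 * φ₁ x) Ω := by
    refine integrableOn (ContinuousOn.mul ?_ hφsm.continuous.continuousOn)
    exact continuousOn_const.div ((continuous_const.sub hw.continuous).pow 2).continuousOn
      fun x hx => pow_ne_zero 2 (sub_pos.2 (hw1 x hx)).ne'
  have htest := eigenvalue_mul_setIntegral_eq hΩ hdiv hφsm hw hφeig hwpde hφrobin hwrobin hwφ hfφ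
  have hlower : μ ≤ lam₁ * ∫ x in Ω, w x * φ₁ x := by
    rw [htest]
    calc μ = ∫ x in Ω, μ * φ₁ x := by rw [integral_const_mul, hφnorm, mul_one]
      _ ≤ ∫ x in Ω, μ / (1 - w x) ^ 2 * φ₁ x := by
        refine setIntegral_mono_on (hφ.const_mul μ) hfφ hΩ fun x hx => ?_
        have h0 := hw0 x (subset_closure hx)
        have h1 := hw1 x (subset_closure hx)
        exact mul_le_mul_of_nonneg_right (le_div_self hμ.le (by nlinarith) (by nlinarith))
          (hφpos x hx).le
  have hI0 : 0 ≤ ∫ x in Ω, w x * φ₁ x :=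
    setIntegral_nonneg hΩ fun x hx => mul_nonneg (hw0 x (subset_closure hx)) (hφpos x hx).le
  have hI1 : ∫ x in Ω, w x * φ₁ x ≤ 1 := hφnorm ▸ setIntegral_mono_on hwφ hφ hΩ fun x hx =>
    mul_le_of_le_one_left (hφpos x hx).le (hw1 x (subset_closure hx)).le
  have hlam : 0 < lam₁ := pos_of_mul_pos_left (hμ.trans_le hlower) hI0
  exact ⟨hlower, mul_le_of_le_one_right hlam.le hI1⟩

theorem stmt_4 {N : ℕ} (Ω : Set (EuclideanSpace ℝ (Fin N)))
    (hΩo : IsOpen Ω) (hΩb : Bornology.IsBounded Ω)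
    (ν : EuclideanSpace ℝ (Fin N) → EuclideanSpace ℝ (Fin N))
    (hν : ∀ x ∈ frontier Ω, ‖ν x‖ = 1)
    (σ : Measure (EuclideanSpace ℝ (Fin N)))
    (hdiv : ∀ F : EuclideanSpace ℝ (Fin N) → EuclideanSpace ℝ (Fin N), ContDiff ℝ 1 F →
      (∫ x in Ω, divg F x) = ∫ x in frontier Ω, (inner ℝ (F x) (ν x) : ℝ) ∂σ)
    (β μ lam₁ : ℝ) (hβ : 0 < β) (hμ : 0 < μ)
    (φ₁ : EuclideanSpace ℝ (Fin N) → ℝ) (hφsm : ContDiff ℝ 2 φ₁)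
    (hφeig : ∀ x ∈ Ω, -lap φ₁ x = lam₁ * φ₁ x)
    (hφrobin : ∀ x ∈ frontier Ω, (inner ℝ (gradient φ₁ x) (ν x) : ℝ) + β * φ₁ x = 0)
    (hφpos : ∀ x ∈ Ω, 0 < φ₁ x)
    (hφnorm : (∫ x in Ω, φ₁ x) = 1)
    (w : EuclideanSpace ℝ (Fin N) → ℝ) (hw : ContDiff ℝ 2 w)
    (hwpde : ∀ x ∈ Ω, -lap w x = μ / (1 - w x) ^ 2)
    (hw0 : ∀ x ∈ closure Ω, 0 ≤ w x) (hw1 : ∀ x ∈ closure Ω, w x < 1)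
    (hwrobin : ∀ x ∈ frontier Ω, (inner ℝ (gradient w x) (ν x) : ℝ) + β * w x = 0) :
    μ ≤ lam₁ * ∫ x in Ω, w x * φ₁ x ∧ lam₁ * (∫ x in Ω, w x * φ₁ x) ≤ lam₁ :=
  stmt_4_general Ω hΩo hΩb ν σ hdiv β μ lam₁ hμ φ₁ hφsm hφeig hφrobin hφpos hφnorm w hw hwpde hw0
    hw1 hwrobin
end

section
/- Suppose M : [0, T_q) → ℝ is Lipschitz with M(t) < 1, and for almost every t, M'(t) ≤ λC(1 − M(t))^{-2} with λ, C > 0, and M(t) → 1 as t → T_q. Then for all t ∈ (0, T_q), M(t) ≥ 1 − (3λC)^{1/3}(T_q − t)^{1/3}. -/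
open MeasureTheory Set Filter

/-!
The function `g = (1 - M)³` is Lipschitz on every `[t, s] ⊆ [0, T_q)`, hence absolutely
continuous, and the differential inequality says exactly that `g' = -3 (1 - M)² M' ≥ -3λC` almost
everywhere. Integrating from `t` to `s` and letting `s → T_q`, where `g(s) → 0`, gives
`(1 - M(t))³ ≤ 3λC (T_q - t)`; take cube roots.
-/

namespace AbsolutelyContinuousOnInterval

theorem pow {f : ℝ → ℝ} {a b : ℝ} (hf : AbsolutelyContinuousOnInterval f a b) (n : ℕ) :
    AbsolutelyContinuousOnInterval (fun x => f x ^ n) a b := by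
  induction n with
  | zero =>
    simpa using (LipschitzWith.const (1 : ℝ)).lipschitzOnWith.absolutelyContinuousOnInterval
  | succ n ih => simpa only [pow_succ] using ih.fun_mul hf

theorem mul_sub_le_sub_of_ae_le_deriv {f : ℝ → ℝ} {a b c : ℝ} (hab : a ≤ b)
    (hf : AbsolutelyContinuousOnInterval f a b)
    (hc : ∀ᵐ x ∂volume.restrict (Ioo a b), c ≤ deriv f x) :
    c * (b - a) ≤ f b - f a := by
  rw [← hf.integral_deriv_eq_sub]
  calc c * (b - a) = ∫ _ in a..b, c := by simp [mul_comm]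
    _ ≤ ∫ x in a..b, deriv f x :=
      intervalIntegral.integral_mono_ae_restrict hab intervalIntegrable_const
        hf.intervalIntegrable_deriv (by rwa [Measure.restrict_congr_set Ioo_ae_eq_Icc] at hc)

end AbsolutelyContinuousOnInterval

theorem neg_mul_sub_le_one_sub_pow_three_sub {M M' : ℝ → ℝ} {t s k : ℝ} {K : NNReal}
    (hts : t ≤ s) (hk : 0 ≤ k) (hLip : LipschitzOnWith K M (Icc t s))
    (hM' : ∀ᵐ x ∂volume.restrict (Ioo t s),
      HasDerivAt M (M' x) x ∧ M' x ≤ k / (1 - M x) ^ 2) :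
    -(3 * k) * (s - t) ≤ (1 - M s) ^ 3 - (1 - M t) ^ 3 := by
  have hac : AbsolutelyContinuousOnInterval (fun x => (1 - M x) ^ 3) t s := by
    refine AbsolutelyContinuousOnInterval.pow ?_ 3
    rw [← uIcc_of_le hts] at hLip
    exact ((LipschitzWith.const (1 : ℝ)).lipschitzOnWith.sub hLip).absolutelyContinuousOnInterval
  refine hac.mul_sub_le_sub_of_ae_le_deriv hts ?_
  filter_upwards [hM'] with x ⟨hderiv, hbound⟩
  rw [((hderiv.const_sub 1).fun_pow 3).deriv]
  -- `mul_le_of_le_div₀` also covers `M x = 1`, where `k / 0 = 0`.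
  have hflux : M' x * (1 - M x) ^ 2 ≤ k := mul_le_of_le_div₀ hk (sq_nonneg _) hbound
  norm_num
  linarith

theorem le_rpow_one_div_three_of_pow_three_le {x y : ℝ} (hy : 0 ≤ y) (h : x ^ 3 ≤ y) :
    x ≤ y ^ ((1 : ℝ) / 3) := by
  rcases le_or_gt x 0 with hx | hx
  · exact hx.trans (Real.rpow_nonneg hy _)
  · calc x = (x ^ 3) ^ ((1 : ℝ) / 3) := by
          rw [one_div, ← Real.rpow_natCast, ← Real.rpow_mul hx.le]; norm_num
      _ ≤ y ^ ((1 : ℝ) / 3) := Real.rpow_le_rpow (by positivity) h (by norm_num)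

theorem stmt_15_general (Tq lam C K : ℝ) (hlam : 0 < lam) (hC : 0 < C)
    (M M' : ℝ → ℝ) (hLip : LipschitzOnWith (Real.toNNReal K) M (Ico 0 Tq))
    (hM' : ∀ᵐ t ∂(volume.restrict (Ioo 0 Tq)),
      HasDerivAt M (M' t) t ∧ M' t ≤ lam * C / (1 - M t) ^ 2)
    (hlim : Tendsto M (nhdsWithin Tq (Iio Tq)) (nhds 1)) :
    ∀ t ∈ Ioo (0:ℝ) Tq,
      1 - (3 * lam * C) ^ ((1:ℝ)/3) * (Tq - t) ^ ((1:ℝ)/3) ≤ M t := by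
  rintro t ⟨ht0, htTq⟩
  have hstep : ∀ s ∈ Ioo t Tq, (1 - M t) ^ 3 ≤ (1 - M s) ^ 3 + 3 * lam * C * (s - t) := by
    rintro s ⟨hts, hsTq⟩
    have := neg_mul_sub_le_one_sub_pow_three_sub hts.le (by positivity)
      (hLip.mono (Icc_subset_Ico ht0.le hsTq))
      (ae_restrict_of_ae_restrict_of_subset (Ioo_subset_Ioo ht0.le hsTq.le) hM')
    linarith
  have hlimit : Tendsto (fun s => (1 - M s) ^ 3 + 3 * lam * C * (s - t)) (nhdsWithin Tq (Iio Tq))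
      (nhds ((1 - 1) ^ 3 + 3 * lam * C * (Tq - t))) :=
    ((tendsto_const_nhds.sub hlim).pow 3).add
      (((continuous_sub_right t).const_mul _).tendsto Tq |>.mono_left nhdsWithin_le_nhds)
  have hcube : (1 - M t) ^ 3 ≤ 3 * lam * C * (Tq - t) := by
    have := ge_of_tendsto hlimit (Filter.mem_of_superset (Ioo_mem_nhdsLT htTq) hstep)
    simpa using this
  have hroot := le_rpow_one_div_three_of_pow_three_le
    (by have := sub_pos.2 htTq; positivity) hcube
  rw [Real.mul_rpow (by positivity) (by linarith)] at hroot
  linarith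

theorem stmt_15 (Tq lam C K : ℝ) (hTq : 0 < Tq) (hlam : 0 < lam) (hC : 0 < C)
    (M M' : ℝ → ℝ) (hLip : LipschitzOnWith (Real.toNNReal K) M (Ico 0 Tq))
    (hM1 : ∀ t ∈ Ico (0:ℝ) Tq, M t < 1)
    (hM' : ∀ᵐ t ∂(volume.restrict (Ioo 0 Tq)),
      HasDerivAt M (M' t) t ∧ M' t ≤ lam * C / (1 - M t) ^ 2)
    (hlim : Tendsto M (nhdsWithin Tq (Iio Tq)) (nhds 1)) :
    ∀ t ∈ Ioo (0:ℝ) Tq,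
      1 - (3 * lam * C) ^ ((1:ℝ)/3) * (Tq - t) ^ ((1:ℝ)/3) ≤ M t :=
  stmt_15_general Tq lam C K hlam hC M M' hLip hM' hlim
end
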